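/- Let (X,T) be a minimal topological dynamical system (X compact metric, T a homeomorphism with no nonempty proper closed invariant subset). An integer-valued continuous function f ∈ C(X,ℤ) is balanced for (X,T) if and only if there exists α ∈ ℝ such that f − α is a real coboundary, i.e., f − α = g∘T − g for some continuous g : X → ℝ. In this case α = ∫ f dμ for every T-invariant Borel probability measure μ on X. -/

import Mathlib

open MeasureTheory Filter

/-- `μ` is a `T`-invariant Borel probability measure. -/
def InvProb {Y : Type*} [MeasurableSpace Y] (T : Y → Y) (μ : Measure Y) : Prop :=
  IsProbabilityMeasure μ ∧ MeasurePreserving T μ μ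

/-- A real-valued function is balanced for the dynamical system given by `T`. -/
def IsBalanced {Y : Type*} (T : Y → Y) (f : Y → ℝ) : Prop :=
  ∃ C : ℝ, 0 < C ∧ ∀ x y : Y, ∀ n : ℕ,
    |∑ i ∈ Finset.range (n + 1), (f (T^[i] x) - f (T^[i] y))| ≤ C

section Aux
open Set

/-- Quasimorphism lemma: a sequence with bounded defect is within `C` of a linear sequence. -/
lemma quasi_lin (a : ℕ → ℝ) (C : ℝ) (hC : 0 < C) (h0 : a 0 = 0)
    (h : ∀ m n, |a (m + n) - a m - a n| ≤ C) :
    ∃ α : ℝ, ∀ n : ℕ, |a n - n * α| ≤ C := by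
  -- growth bound
  have hgrow : ∀ n : ℕ, |a n| ≤ n * (|a 1| + C) := by
    intro n
    induction n with
    | zero => simp [h0]
    | succ n ih =>
      have h1 := h n 1
      have : |a (n + 1)| ≤ |a n| + |a 1| + C := by
        have := abs_sub_abs_le_abs_sub (a (n+1)) (a n + a 1)
        have habs : |a (n+1) - (a n + a 1)| ≤ C := by
          have := h n 1; convert this using 2; ring
        have := abs_add_le (a n) (a 1)
        nlinarith [abs_nonneg (a (n+1)), abs_nonneg (a n)]
      push_cast
      nlinarith [abs_nonneg (a 1)]
  set b : ℕ → ℝ := fun n => a n + C with hb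
  set u : ℕ → ℝ := fun n => C - a n with hu
  have hbsub : Subadditive b := by
    intro m n
    have := h m n
    have := abs_le.1 (h m n)
    simp only [hb]
    linarith [this.2]
  have husub : Subadditive u := by
    intro m n
    have := abs_le.1 (h m n)
    simp only [hu]
    linarith [this.1]
  have hbbdd : BddBelow (range fun n : ℕ => b n / n) := by
    refine ⟨-(|a 1| + C) - C, ?_⟩
    rintro x ⟨n, rfl⟩
    rcases Nat.eq_zero_or_pos n with hn | hn
    · subst hn; simp [hb, h0]; nlinarith [abs_nonneg (a 1)]
    · have hn' : (0:ℝ) < n := by exact_mod_cast hn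
      have := hgrow n
      have hge : a n ≥ -(n * (|a 1| + C)) := by
        have := abs_le.1 this; linarith [this.1]
      simp only [hb]
      rw [le_div_iff₀ hn']
      nlinarith [hC.le, abs_nonneg (a 1)]
  have hubdd : BddBelow (range fun n : ℕ => u n / n) := by
    refine ⟨-(|a 1| + C) - C, ?_⟩
    rintro x ⟨n, rfl⟩
    rcases Nat.eq_zero_or_pos n with hn | hn
    · subst hn; simp [hu, h0]; nlinarith [abs_nonneg (a 1)]
    · have hn' : (0:ℝ) < n := by exact_mod_cast hn
      have := hgrow n
      have hle : a n ≤ n * (|a 1| + C) := (abs_le.1 this).2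
      simp only [hu]
      rw [le_div_iff₀ hn']
      nlinarith [hC.le, abs_nonneg (a 1)]
  have hbt := hbsub.tendsto_lim hbbdd
  have hut := husub.tendsto_lim hubdd
  -- a n / n tends to hbsub.lim
  have hCn : Tendsto (fun n : ℕ => C / n) atTop (nhds 0) :=
    tendsto_const_div_atTop_nhds_zero_nat C
  have hat : Tendsto (fun n : ℕ => a n / n) atTop (nhds hbsub.lim) := by
    have : (fun n : ℕ => a n / n) = fun n : ℕ => b n / n - C / n := by
      funext n; simp [hb]; ring
    rw [this]
    simpa using hbt.sub hCn
  have hat' : Tendsto (fun n : ℕ => a n / n) atTop (nhds (-husub.lim)) := by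
    have : (fun n : ℕ => a n / n) = fun n : ℕ => C / n - u n / n := by
      funext n; simp [hu]; ring
    rw [this]
    have := hCn.sub hut
    simpa using this
  have hlim : husub.lim = -hbsub.lim := by
    have := tendsto_nhds_unique hat hat'
    linarith
  refine ⟨hbsub.lim, fun n => ?_⟩
  rcases Nat.eq_zero_or_pos n with hn | hn
  · subst hn; simp [h0]; exact hC.le
  have hn' : (0:ℝ) < n := by exact_mod_cast hn
  have h1 : hbsub.lim ≤ b n / n := hbsub.lim_le_div hbbdd hn.ne'
  have h2 : husub.lim ≤ u n / n := husub.lim_le_div hubdd hn.ne'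
  rw [hlim] at h2
  rw [le_div_iff₀ hn'] at h1 h2
  simp only [hb] at h1
  simp only [hu] at h2
  rw [abs_le]
  constructor <;> nlinarith

lemma gottschalk_hedlund {X : Type*} [MetricSpace X] [CompactSpace X]
    (T : X ≃ₜ X)
    (hmin : ∀ F : Set X, IsClosed F → (∀ x ∈ F, T x ∈ F) → F = ∅ ∨ F = Set.univ)
    (h : C(X, ℝ)) (x0 : X) (B : ℝ)
    (hB : ∀ n : ℕ, |∑ i ∈ Finset.range n, h (T^[i] x0)| ≤ B) :
    ∃ g : C(X, ℝ), ∀ x, h x = g (T x) - g x := by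
  classical
  set F : X × ℝ → X × ℝ := fun p => (T p.1, p.2 + h p.1) with hF
  have hFc : Continuous F :=
    (T.continuous.comp continuous_fst).prodMk
      (continuous_snd.add (h.continuous.comp continuous_fst))
  set orb : ℕ → X × ℝ := fun n => (T^[n] x0, ∑ i ∈ Finset.range n, h (T^[i] x0)) with horb
  set K : Set (X × ℝ) := closure (Set.range orb) with hK
  have hKsub : K ⊆ Set.univ ×ˢ Set.Icc (-B) B := by
    apply closure_minimal
    · rintro _ ⟨n, rfl⟩
      exact ⟨Set.mem_univ _, abs_le.1 (hB n)⟩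
    · exact isClosed_univ.prod isClosed_Icc
  have hKcomp : IsCompact K :=
    IsCompact.of_isClosed_subset (isCompact_univ.prod isCompact_Icc) isClosed_closure hKsub
  have horbinv : Set.MapsTo F (Set.range orb) (Set.range orb) := by
    rintro _ ⟨n, rfl⟩
    refine ⟨n + 1, ?_⟩
    simp only [horb, hF, Finset.sum_range_succ, Function.iterate_succ_apply']
  have hKinv : Set.MapsTo F K K := horbinv.closure hFc
  have hKne : K.Nonempty := ⟨orb 0, subset_closure ⟨0, rfl⟩⟩
  -- Zorn: minimal nonempty closed invariant subset of K
  set 𝒞 : Set (Set (X × ℝ)) :=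
    {A | A.Nonempty ∧ IsClosed A ∧ A ⊆ K ∧ Set.MapsTo F A A} with h𝒞
  have hchainC : ∀ c ⊆ 𝒞, IsChain (· ⊆ ·) c → c.Nonempty →
      ∃ lb ∈ 𝒞, ∀ s ∈ c, lb ⊆ s := by
    intro c hcS hchain hcne
    refine ⟨⋂₀ c, ⟨?_, ?_, ?_, ?_⟩, fun s hs => Set.sInter_subset_of_mem hs⟩
    · haveI : Nonempty c := hcne.to_subtype
      apply IsCompact.nonempty_sInter_of_directed_nonempty_isCompact_isClosed
      · intro a ha b hb
        rcases hchain.total ha hb with hab | hab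
        · exact ⟨a, ha, subset_rfl, hab⟩
        · exact ⟨b, hb, hab, subset_rfl⟩
      · exact fun U hU => (hcS hU).1
      · exact fun U hU => hKcomp.of_isClosed_subset (hcS hU).2.1 (hcS hU).2.2.1
      · exact fun U hU => (hcS hU).2.1
    · exact isClosed_sInter fun U hU => (hcS hU).2.1
    · obtain ⟨U, hU⟩ := hcne
      exact (Set.sInter_subset_of_mem hU).trans (hcS hU).2.2.1
    · intro p hp
      exact Set.mem_sInter.2 fun U hU => (hcS hU).2.2.2 (Set.mem_sInter.1 hp U hU)
  obtain ⟨M, -, hMmin⟩ :=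
    zorn_superset_nonempty 𝒞 hchainC K ⟨hKne, isClosed_closure, subset_rfl, hKinv⟩
  obtain ⟨⟨hMne, hMcl, hMK, hMF⟩, hMle⟩ := hMmin
  have hMcomp : IsCompact M := hKcomp.of_isClosed_subset hMcl hMK
  -- the first projection of M is all of X
  have hfull : ∀ x : X, ∃ t : ℝ, (x, t) ∈ M := by
    have hPcl : IsClosed (Prod.fst '' M) := (hMcomp.image continuous_fst).isClosed
    have hPinv : ∀ x ∈ Prod.fst '' M, T x ∈ Prod.fst '' M := by
      rintro _ ⟨p, hp, rfl⟩
      exact ⟨F p, hMF hp, rfl⟩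
    rcases hmin _ hPcl hPinv with hP | hP
    · obtain ⟨p, hp⟩ := hMne
      exact absurd (Set.mem_image_of_mem Prod.fst hp) (by simp [hP])
    · intro x
      have : x ∈ Prod.fst '' M := hP ▸ Set.mem_univ x
      obtain ⟨p, hp, hpx⟩ := this
      exact ⟨p.2, by rwa [← hpx, Prod.mk.eta]⟩
  -- fibers of M are singletons
  have huniq : ∀ (x : X) (t s : ℝ), (x, t) ∈ M → (x, s) ∈ M → t = s := by
    intro x t s hxt hxs
    by_contra hne
    set d : ℝ := t - s with hd
    have hd0 : d ≠ 0 := sub_ne_zero.2 hne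
    set τ : X × ℝ → X × ℝ := fun p => (p.1, p.2 + d) with hτ
    have hτc : Continuous τ := continuous_fst.prodMk (continuous_snd.add continuous_const)
    have hcomm : ∀ p, F (τ p) = τ (F p) := by
      intro p; simp only [hF, hτ]; exact Prod.ext rfl (by ring)
    have hAmem : M ∩ τ '' M ∈ 𝒞 := by
      refine ⟨⟨(x, t), hxt, ⟨(x, s), hxs, ?_⟩⟩, hMcl.inter (hMcomp.image hτc).isClosed,
        Set.inter_subset_left.trans hMK, ?_⟩
      · simp only [hτ, hd]; exact Prod.ext rfl (by ring)
      · rintro p ⟨hpM, q, hqM, rfl⟩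
        exact ⟨hMF hpM, F q, hMF hqM, (hcomm q).symm⟩
    have hsubτ : M ⊆ τ '' M :=
      (hMle hAmem Set.inter_subset_left).trans Set.inter_subset_right
    have hiter : ∀ (n : ℕ) (p : X × ℝ), p ∈ M → (p.1, p.2 - n * d) ∈ M := by
      intro n
      induction n with
      | zero => intro p hp; simpa [Prod.mk.eta] using hp
      | succ n ih =>
        intro p hp
        obtain ⟨q, hq, hqp⟩ := hsubτ hp
        have h1 := ih q hq
        have hq1 : q.1 = p.1 := by rw [← hqp]
        have hq2 : q.2 = p.2 - d := by
          have : (τ q).2 = p.2 := by rw [hqp]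
          simp only [hτ] at this
          linarith
        rw [hq1, hq2] at h1
        convert h1 using 2
        push_cast; ring
    have htK : ∀ n : ℕ, |t - n * d| ≤ B := by
      intro n
      have := hKsub (hMK (hiter n (x, t) hxt))
      exact abs_le.2 ⟨this.2.1, this.2.2⟩
    have htB : |t| ≤ B := by
      have := hKsub (hMK hxt)
      exact abs_le.2 ⟨this.2.1, this.2.2⟩
    obtain ⟨n, hn⟩ := exists_nat_gt (2 * B / |d|)
    have hdpos : (0:ℝ) < |d| := abs_pos.2 hd0
    have hn' : 2 * B < n * |d| := by
      rw [div_lt_iff₀ hdpos] at hn; linarith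
    have : (n : ℝ) * |d| ≤ 2 * B := by
      have h1 := htK n
      have h2 : |(n : ℝ) * d| ≤ |t| + |t - n * d| := by
        have h3 := abs_sub t (t - n * d)
        have heq : t - (t - n * d) = (n : ℝ) * d := by ring
        rwa [heq] at h3
      rw [abs_mul, Nat.abs_cast] at h2
      linarith
    linarith
  -- define g
  choose g0 hg0 using hfull
  haveI : CompactSpace M := isCompact_iff_compactSpace.1 hMcomp
  let e : M ≃ X :=
    { toFun := fun p => p.1.1
      invFun := fun x => ⟨(x, g0 x), hg0 x⟩
      left_inv := by
        rintro ⟨p, hp⟩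
        have hp' : (p.1, p.2) ∈ M := by rwa [Prod.mk.eta]
        exact Subtype.ext (Prod.ext rfl (huniq p.1 _ _ (hg0 p.1) hp'))
      right_inv := fun x => rfl }
  have hec : Continuous e := continuous_fst.comp continuous_subtype_val
  let homeo : M ≃ₜ X := hec.homeoOfEquivCompactToT2
  have hg0c : Continuous g0 := by
    have : g0 = fun x => ((homeo.symm x : M) : X × ℝ).2 := rfl
    rw [this]
    exact continuous_snd.comp (continuous_subtype_val.comp homeo.symm.continuous)
  refine ⟨⟨g0, hg0c⟩, fun x => ?_⟩
  have h1 : (T x, g0 x + h x) ∈ M := hMF (hg0 x)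
  have h2 := huniq (T x) _ _ (hg0 (T x)) h1
  simp only [ContinuousMap.coe_mk]
  linarith
end Aux

theorem stmt14 {X : Type*} [MetricSpace X] [CompactSpace X]
    [MeasurableSpace X] [BorelSpace X]
    (T : X ≃ₜ X)
    (hmin : ∀ F : Set X, IsClosed F → (∀ x ∈ F, T x ∈ F) → F = ∅ ∨ F = Set.univ)
    (f : C(X, ℤ)) :
    (IsBalanced (⇑T) (fun x => (f x : ℝ)) ↔
      ∃ (α : ℝ) (g : C(X, ℝ)), ∀ x, (f x : ℝ) - α = g (T x) - g x)
    ∧ ∀ (α : ℝ) (g : C(X, ℝ)), (∀ x, (f x : ℝ) - α = g (T x) - g x) →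
        ∀ μ : Measure X, InvProb (⇑T) μ → α = ∫ x, (f x : ℝ) ∂μ := by
  have hfc : Continuous fun x : X => (f x : ℝ) :=
    continuous_of_discreteTopology.comp f.continuous
  constructor
  · constructor
    · rintro ⟨C, hC, hbal⟩
      rcases isEmpty_or_nonempty X with hX | hX
      · exact ⟨0, 0, fun x => hX.elim x⟩
      obtain ⟨x0⟩ := hX
      set S : ℕ → X → ℝ := fun n x => ∑ i ∈ Finset.range n, (f (T^[i] x) : ℝ) with hSdef
      have hS : ∀ (x y : X) (n : ℕ), |S n x - S n y| ≤ C := by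
        intro x y n
        match n with
        | 0 => simpa [hSdef] using hC.le
        | m + 1 =>
          have := hbal x y m
          rwa [Finset.sum_sub_distrib] at this
      have hcoc : ∀ (m n : ℕ) (x : X), S (m + n) x = S m x + S n (T^[m] x) := by
        intro m n x
        simp only [hSdef]
        rw [Finset.sum_range_add]
        congr 1
        refine Finset.sum_congr rfl fun i _ => ?_
        rw [add_comm m i, Function.iterate_add_apply]
      have hquasi : ∀ m n : ℕ, |S (m + n) x0 - S m x0 - S n x0| ≤ C := by
        intro m n
        rw [hcoc m n x0]
        have := hS (T^[m] x0) x0 n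
        have heq : S m x0 + S n (T^[m] x0) - S m x0 - S n x0
            = S n (T^[m] x0) - S n x0 := by ring
        rwa [heq]
      obtain ⟨α, hα⟩ := quasi_lin (fun n => S n x0) C hC (by simp [hSdef]) hquasi
      have hbnd : ∀ (n : ℕ) (x : X), |S n x - n * α| ≤ C + C := by
        intro n x
        have h1 := hS x x0 n
        have h2 := hα n
        calc |S n x - n * α| = |(S n x - S n x0) + (S n x0 - n * α)| := by ring_nf
        _ ≤ |S n x - S n x0| + |S n x0 - n * α| := abs_add_le _ _
        _ ≤ C + C := add_le_add h1 h2
      set h : C(X, ℝ) := ⟨fun x => (f x : ℝ) - α, hfc.sub continuous_const⟩ with hh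
      have hhsum : ∀ (n : ℕ) (x : X),
          ∑ i ∈ Finset.range n, h (T^[i] x) = S n x - n * α := by
        intro n x
        simp only [hh, ContinuousMap.coe_mk, hSdef]
        rw [Finset.sum_sub_distrib, Finset.sum_const, Finset.card_range, nsmul_eq_mul]
      obtain ⟨g, hg⟩ := gottschalk_hedlund T hmin h x0 (C + C)
        (fun n => by rw [hhsum]; exact hbnd n x0)
      exact ⟨α, g, fun x => hg x⟩
    · rintro ⟨α, g, hg⟩
      refine ⟨4 * ‖g‖ + 1, by positivity, fun x y n => ?_⟩
      have htel : ∀ (z : X) (m : ℕ),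
          ∑ i ∈ Finset.range m, ((f (T^[i] z) : ℝ) - α) = g (T^[m] z) - g z := by
        intro z m
        induction m with
        | zero => simp
        | succ m ih =>
          rw [Finset.sum_range_succ, ih, Function.iterate_succ_apply']
          have := hg (T^[m] z)
          linarith
      have hkey : ∑ i ∈ Finset.range (n + 1), ((f (T^[i] x) : ℝ) - (f (T^[i] y) : ℝ))
          = (g (T^[n+1] x) - g x) - (g (T^[n+1] y) - g y) := by
        rw [← htel x (n + 1), ← htel y (n + 1), ← Finset.sum_sub_distrib]
        refine Finset.sum_congr rfl fun i _ => ?_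
        ring
      rw [hkey]
      have hb : ∀ z : X, |g z| ≤ ‖g‖ := fun z => by
        rw [← Real.norm_eq_abs]; exact g.norm_coe_le_norm z
      have h1 := hb (T^[n+1] x); have h2 := hb x
      have h3 := hb (T^[n+1] y); have h4 := hb y
      have := abs_sub (g (T^[n+1] x) - g x) (g (T^[n+1] y) - g y)
      have h5 := abs_sub (g (T^[n+1] x)) (g x)
      have h6 := abs_sub (g (T^[n+1] y)) (g y)
      linarith
  · rintro α g hg μ ⟨hprob, hTm⟩
    haveI := hprob
    have hfint : Integrable (fun x => (f x : ℝ)) μ :=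
      hfc.integrable_of_hasCompactSupport (HasCompactSupport.of_compactSpace _)
    have hgTint : Integrable (fun x => g (T x)) μ :=
      (g.continuous.comp T.continuous).integrable_of_hasCompactSupport
        (HasCompactSupport.of_compactSpace _)
    have hgint : Integrable (fun x => g x) μ :=
      g.continuous.integrable_of_hasCompactSupport (HasCompactSupport.of_compactSpace _)
    have hint1 : ∫ x, ((f x : ℝ) - α) ∂μ = ∫ x, (g (T x) - g x) ∂μ := by
      exact integral_congr_ae (Filter.Eventually.of_forall hg)
    rw [integral_sub hfint (integrable_const α), integral_sub hgTint hgint] at hint1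
    have hcomp : ∫ x, g (T x) ∂μ = ∫ x, g x ∂μ :=
      hTm.integral_comp T.measurableEmbedding g
    rw [hcomp, sub_self, integral_const] at hint1
    simp only [measure_univ, probReal_univ, ENNReal.toReal_one, smul_eq_mul, one_mul] at hint1
    linarith
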